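/- If q > 3 is a prime, then the achromatic number of the unitary addition Cayley graph U(ℤ_{3q}) equals (3q + 1)/2. -/

import Mathlib

/-- The unitary addition Cayley graph of a ring `R`: vertices are elements of `R`,
and distinct `x`, `y` are adjacent iff `x + y` is a unit. -/
def unitaryCayley (R : Type*) [CommRing R] : SimpleGraph R where
  Adj x y := x ≠ y ∧ IsUnit (x + y)
  symm := ⟨fun x y ⟨h1, h2⟩ => ⟨h1.symm, by rwa [add_comm]⟩⟩
  loopless := ⟨fun x ⟨h, _⟩ => h rfl⟩

/-- A proper coloring is complete if it is surjective and between every pair of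
distinct color classes there is at least one edge. -/
def IsCompleteColoring {V β : Type*} (G : SimpleGraph V) (C : G.Coloring β) : Prop :=
  Function.Surjective C ∧
    ∀ c₁ c₂ : β, c₁ ≠ c₂ → ∃ x y, G.Adj x y ∧ C x = c₁ ∧ C y = c₂

/-- The achromatic number: the maximum number of colors in a complete proper coloring. -/
noncomputable def achromaticNumber {V : Type*} (G : SimpleGraph V) : ℕ :=
  sSup {n | ∃ C : G.Coloring (Fin n), IsCompleteColoring G C}

/-!
By the Chinese remainder theorem `U(ℤ_{3q})` is the graph on `ℤ₃ × ℤ_q` in which distinct `u, v`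
are adjacent iff `u.1 + v.1 ≠ 0` and `u.2 + v.2 ≠ 0`.

Upper bound: row `0` is independent, so at most one colour class lies inside it. If `{v}` is a
singleton class off row `0`, completeness forces the class of `(0, -v.2)` into row `0`, and distinct
such singletons give distinct vertices `(0, -v.2)`. Every other class has at least two elements, so
counting vertices gives `2k ≤ 3q + 2`.

Lower bound: pairing `(0, c)` with `(±1, -c)` and `(1, x)` with `(2, x - q / 2)` for
`0 ≤ x ≤ q / 2` gives a complete colouring with `q + (q + 1) / 2` colours.
-/

open Finset SimpleGraph Function

section CompleteColoring

variable {V W α β : Type*} {G : SimpleGraph V} {H : SimpleGraph W}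

lemma exists_adj_swap {f : V → α} {a b : α} (h : ∃ x y, G.Adj x y ∧ f x = a ∧ f y = b) :
    ∃ x y, G.Adj x y ∧ f x = b ∧ f y = a :=
  let ⟨x, y, hxy, hx, hy⟩ := h
  ⟨y, x, hxy.symm, hy, hx⟩

lemma IsCompleteColoring.recolor {C : G.Coloring α} (hC : IsCompleteColoring G C) (f : α ≃ β) :
    IsCompleteColoring G (G.recolorOfEquiv f C) := by
  refine ⟨f.surjective.comp hC.1, fun c₁ c₂ hne => ?_⟩
  obtain ⟨x, y, hxy, hx, hy⟩ := hC.2 (f.symm c₁) (f.symm c₂) (by simpa using hne)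
  exact ⟨x, y, hxy, by simp [hx], by simp [hy]⟩

lemma IsCompleteColoring.comp_iso {C : H.Coloring α} (hC : IsCompleteColoring H C) (e : G ≃g H) :
    IsCompleteColoring G (C.comp e.toHom) := by
  refine ⟨fun c => ?_, fun c₁ c₂ hne => ?_⟩
  · obtain ⟨w, rfl⟩ := hC.1 c
    exact ⟨e.symm w, by simp⟩
  · obtain ⟨x, y, hxy, rfl, rfl⟩ := hC.2 c₁ c₂ hne
    exact ⟨e.symm x, e.symm y, e.symm.map_adj_iff.mpr hxy, by simp, by simp⟩

lemma IsCompleteColoring.exists_adj_of_forall_eq {C : G.Coloring α}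
    (hC : IsCompleteColoring G C) {v : V} (hv : ∀ u, C u = C v → u = v) {c : α} (hc : c ≠ C v) :
    ∃ y, G.Adj v y ∧ C y = c := by
  obtain ⟨x, y, hxy, hx, hy⟩ := hC.2 (C v) c hc.symm
  exact ⟨y, hv x hx ▸ hxy, hy⟩

lemma achromaticNumber_congr (e : G ≃g H) : achromaticNumber G = achromaticNumber H := by
  unfold achromaticNumber
  congr 1
  ext n
  exact ⟨fun ⟨C, hC⟩ => ⟨_, hC.comp_iso e.symm⟩, fun ⟨C, hC⟩ => ⟨_, hC.comp_iso e⟩⟩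

lemma achromaticNumber_eq {n : ℕ} (h : ∃ C : G.Coloring (Fin n), IsCompleteColoring G C)
    (hle : ∀ k (C : G.Coloring (Fin k)), IsCompleteColoring G C → k ≤ n) :
    achromaticNumber G = n :=
  IsGreatest.csSup_eq ⟨h, fun k ⟨C, hC⟩ => hle k C hC⟩

end CompleteColoring

def unitaryCayleyCongr {R S : Type*} [CommRing R] [CommRing S] (e : R ≃+* S) :
    unitaryCayley R ≃g unitaryCayley S where
  toEquiv := e.toEquiv
  map_rel_iff' {x y} := by
    simp only [unitaryCayley, RingEquiv.toEquiv_eq_coe, EquivLike.coe_coe, ← map_add,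
      isUnit_map_iff, ne_eq, EmbeddingLike.apply_eq_iff_eq]

lemma unitaryCayley_prod_adj {F K : Type*} [Field F] [Field K] {u v : F × K} :
    (unitaryCayley (F × K)).Adj u v ↔ u ≠ v ∧ u.1 + v.1 ≠ 0 ∧ u.2 + v.2 ≠ 0 := by
  simp only [unitaryCayley, Prod.isUnit_iff, Prod.fst_add, Prod.snd_add, isUnit_iff_ne_zero]

lemma zmod_three_add_eq_zero_of_ne {a b : ZMod 3} (ha : a ≠ 0) (hb : b ≠ 0) (hab : a ≠ b) :
    a + b = 0 := by
  revert a b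
  decide

section UpperBound

variable {K β : Type*} [Field K] {C : (unitaryCayley (ZMod 3 × K)).Coloring β}

lemma not_adj_of_snd_eq {x y : ZMod 3 × K} (hx : x.1 ≠ 0) (hy : y.1 ≠ 0) (h : x.2 = y.2) :
    ¬ (unitaryCayley (ZMod 3 × K)).Adj x y := by
  rw [unitaryCayley_prod_adj]
  rintro ⟨hne, h1, -⟩
  exact h1 (zmod_three_add_eq_zero_of_ne hx hy fun h' => hne (Prod.ext h' h))

lemma snd_add_eq_zero_of_color_eq {x y : ZMod 3 × K} (hxy : C x = C y) (hx : x.1 = 0)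
    (hy : y.1 ≠ 0) : x.2 + y.2 = 0 := by
  by_contra h
  refine C.valid ?_ hxy
  rw [unitaryCayley_prod_adj]
  exact ⟨fun e => hy (e ▸ hx), by rwa [hx, zero_add], h⟩

lemma IsCompleteColoring.fst_eq_zero_of_color_eq_mirror (hC : IsCompleteColoring _ C)
    {v : ZMod 3 × K} (hv : v.1 ≠ 0) (hsingle : ∀ u, C u = C v → u = v) {u : ZMod 3 × K}
    (hu : C u = C (0, -v.2)) : u.1 = 0 := by
  by_contra hu0
  have hu2 : -v.2 + u.2 = 0 := snd_add_eq_zero_of_color_eq hu.symm rfl hu0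
  have hw : C (0, -v.2) ≠ C v := fun h => hv (congrArg Prod.fst (hsingle _ h)).symm
  obtain ⟨y, hvy, hy⟩ := hC.exists_adj_of_forall_eq hsingle hw
  by_cases hy0 : y.1 = 0
  · have hyu : y.2 + u.2 = 0 := snd_add_eq_zero_of_color_eq (hy.trans hu.symm) hy0 hu0
    exact (unitaryCayley_prod_adj.mp hvy).2.2 (by linear_combination hyu - hu2)
  · have hwy : -v.2 + y.2 = 0 := snd_add_eq_zero_of_color_eq hy.symm rfl hy0
    exact not_adj_of_snd_eq hv hy0 (by linear_combination -hwy) hvy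

lemma IsCompleteColoring.snd_ne_of_forall_eq (hC : IsCompleteColoring _ C) {v w : ZMod 3 × K}
    (hv : v.1 ≠ 0) (hw : w.1 ≠ 0) (hv' : ∀ u, C u = C v → u = v) (hw' : ∀ u, C u = C w → u = w)
    (hvw : C v ≠ C w) : v.2 ≠ w.2 := by
  intro h
  obtain ⟨y, hvy, hy⟩ := hC.exists_adj_of_forall_eq hv' hvw.symm
  rw [hw' y hy] at hvy
  exact not_adj_of_snd_eq hv hw h hvy

end UpperBound

section Count

variable {K β : Type*} [Field K] [Fintype K] [Fintype β] [DecidableEq β]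
  {C : (unitaryCayley (ZMod 3 × K)).Coloring β}

lemma IsCompleteColoring.card_colors_fst_eq_zero_le_one (hC : IsCompleteColoring _ C) :
    #({c | ∀ v, C v = c → v.1 = 0} : Finset β) ≤ 1 := by
  refine card_le_one.mpr fun a ha b hb => by_contra fun hab => ?_
  obtain ⟨x, y, hxy, rfl, rfl⟩ := hC.2 a b hab
  have hx : x.1 = 0 := (mem_filter.mp ha).2 x rfl
  have hy : y.1 = 0 := (mem_filter.mp hb).2 y rfl
  exact (unitaryCayley_prod_adj.mp hxy).2.1 (by rw [hx, hy, add_zero])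

lemma IsCompleteColoring.card_singleton_colors_le (hC : IsCompleteColoring _ C) :
    #(({c | ∀ v, C v = c → v.1 = 0} : Finset β)ᶜ.filter fun c => #{v | C v = c} = 1) ≤
      ∑ c with ∀ v, C v = c → v.1 = 0, #{v | C v = c} := by
  classical
  set pick := surjInv hC.1
  have hsingle : ∀ c ∈ ({c | ∀ v, C v = c → v.1 = 0} : Finset β)ᶜ.filter
      (fun c => #{v | C v = c} = 1), (pick c).1 ≠ 0 ∧ ∀ u, C u = C (pick c) → u = pick c := by
    intro c hc
    obtain ⟨hcT, hc1⟩ := mem_filter.mp hc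
    have hv : C (pick c) = c := surjInv_eq hC.1 c
    have halone : ∀ u, C u = c → u = pick c := fun u hu =>
      card_le_one.mp hc1.le _ (mem_filter.mpr ⟨mem_univ _, hu⟩) _ (mem_filter.mpr ⟨mem_univ _, hv⟩)
    refine ⟨fun h0 => mem_compl.mp hcT (mem_filter.mpr ⟨mem_univ _, fun u hu => ?_⟩),
      fun u hu => halone u (hu.trans hv)⟩
    rwa [halone u hu]
  refine (card_le_card_of_injOn (fun c => ((0 : ZMod 3), -(pick c).2)) ?_ ?_).trans card_biUnion_le
  · intro c hc
    obtain ⟨hv, halone⟩ := hsingle c hc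
    exact mem_biUnion.mpr ⟨_, mem_filter.mpr ⟨mem_univ _, fun u hu =>
      hC.fst_eq_zero_of_color_eq_mirror hv halone hu⟩, mem_filter.mpr ⟨mem_univ _, rfl⟩⟩
  · intro c hc c' hc' h
    obtain ⟨hv, halone⟩ := hsingle c hc
    obtain ⟨hv', halone'⟩ := hsingle c' hc'
    by_contra hne
    refine hC.snd_ne_of_forall_eq hv hv' halone halone' ?_ (neg_inj.mp (congrArg Prod.snd h))
    rwa [surjInv_eq hC.1, surjInv_eq hC.1]

theorem IsCompleteColoring.two_mul_card_le (hC : IsCompleteColoring _ C) :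
    2 * Fintype.card β ≤ 3 * Fintype.card K + 2 := by
  set cls : β → Finset (ZMod 3 × K) := fun c => {v | C v = c}
  set T : Finset β := {c | ∀ v, C v = c → v.1 = 0}
  set S : Finset β := Tᶜ.filter fun c => #(cls c) = 1
  set R : Finset β := Tᶜ.filter fun c => #(cls c) ≠ 1
  have hT : #T ≤ 1 := hC.card_colors_fst_eq_zero_le_one
  have hS : #S ≤ ∑ c ∈ T, #(cls c) := hC.card_singleton_colors_le
  have hR : 2 * #R ≤ ∑ c ∈ R, #(cls c) := by
    rw [mul_comm, ← smul_eq_mul]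
    refine card_nsmul_le_sum _ _ _ fun c hc => ?_
    obtain ⟨v, hv⟩ := hC.1 c
    have : 0 < #(cls c) := card_pos.mpr ⟨v, mem_filter.mpr ⟨mem_univ _, hv⟩⟩
    have := (mem_filter.mp hc).2
    omega
  have hSsum : ∑ c ∈ S, #(cls c) = #S := by
    rw [card_eq_sum_ones]
    exact sum_congr rfl fun c hc => (mem_filter.mp hc).2
  have htotal : ∑ c, #(cls c) = 3 * Fintype.card K := by
    rw [← card_eq_sum_card_fiberwise fun _ _ => mem_univ _, card_univ, Fintype.card_prod,
      ZMod.card]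
  have hsum : ∑ c, #(cls c) = ∑ c ∈ T, #(cls c) + (∑ c ∈ S, #(cls c) + ∑ c ∈ R, #(cls c)) := by
    rw [← sum_add_sum_compl T, sum_filter_add_sum_filter_not]
  have hcard : Fintype.card β = #T + (#S + #R) := by
    rw [card_filter_add_card_filter_not, card_add_card_compl]
  omega

end Count

section LowerBound

lemma ZMod.natCast_ne_zero_of_lt {n q : ℕ} (h0 : 0 < n) (hn : n < q) : (n : ZMod q) ≠ 0 := by
  rw [← ZMod.val_ne_zero, ZMod.val_cast_of_lt hn]
  exact h0.ne'

variable {q : ℕ}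

variable (q) in
def rowShift (a : ZMod 3) : ZMod q := if a = 1 then 0 else (q / 2 : ℕ)

variable (q) in
/-- The classes are `{(0, 0)}`, the pairs `{(0, c), (a, -c)}` for `c ≠ 0` and a suitable row
`a ≠ 0`, and the pairs `{(1, x), (2, x - q / 2)}` for `x.val ≤ q / 2`; the shift by `q / 2` (rather
than pairing `(1, x)` with `(2, -x)`) keeps the class of `(1, 0)` joined to `{(0, 0)}`. -/
def extremalColor (v : ZMod 3 × ZMod q) : ZMod q ⊕ Fin (q / 2 + 1) :=
  if v.1 = 0 then .inl v.2
  else if h : (v.2 + rowShift q v.1).val ≤ q / 2 then .inr ⟨_, Nat.lt_succ_of_le h⟩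
  else .inl (-v.2)

lemma extremalColor_zero (b : ZMod q) : extremalColor q (0, b) = .inl b := if_pos rfl

lemma extremalColor_sub_rowShift [NeZero q] {a : ZMod 3} (ha : a ≠ 0) (i : Fin (q / 2 + 1)) :
    extremalColor q (a, (i : ℕ) - rowShift q a) = .inr i := by
  have hi : ((i : ℕ) : ZMod q).val = i :=
    ZMod.val_cast_of_lt (by have := i.2; have := NeZero.ne q; omega)
  simp [extremalColor, ha, hi, Nat.le_of_lt_succ i.2]

lemma eq_neg_of_extremalColor_eq_inl {a : ZMod 3} (ha : a ≠ 0) {b c : ZMod q}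
    (h : extremalColor q (a, b) = .inl c) : b = -c := by
  unfold extremalColor at h
  split_ifs at h with h0
  · exact absurd h0 ha
  · rw [← Sum.inl_injective h, neg_neg]

lemma extremalColor_injective_row [NeZero q] {a : ZMod 3} {b b' : ZMod q}
    (h : extremalColor q (a, b) = extremalColor q (a, b')) : b = b' := by
  unfold extremalColor at h
  split_ifs at h <;> simp_all [(ZMod.val_injective q).eq_iff]

lemma extremalColor_valid [Fact q.Prime] {u v : ZMod 3 × ZMod q}
    (h : (unitaryCayley (ZMod 3 × ZMod q)).Adj u v) : extremalColor q u ≠ extremalColor q v := by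
  intro heq
  obtain ⟨hne, h1, h2⟩ := unitaryCayley_prod_adj.mp h
  obtain ⟨a, b⟩ := u
  obtain ⟨a', b'⟩ := v
  by_cases haa : a = a'
  · subst haa
    exact hne (by rw [extremalColor_injective_row heq])
  by_cases ha : a = 0
  · subst ha
    rw [extremalColor_zero] at heq
    exact h2 (by rw [eq_neg_of_extremalColor_eq_inl (Ne.symm haa) heq.symm]; ring)
  by_cases ha' : a' = 0
  · subst ha'
    rw [extremalColor_zero] at heq
    exact h2 (by rw [eq_neg_of_extremalColor_eq_inl ha heq]; ring)
  exact h1 (zmod_three_add_eq_zero_of_ne ha ha' haa)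

lemma exists_extremalColor_eq_inl [NeZero q] (hq : Odd q) {c : ZMod q} (hc : c ≠ 0) :
    ∃ a ≠ 0, extremalColor q (a, -c) = .inl c := by
  by_cases hs : (-c).val ≤ q / 2
  · have h2 : (2 : ZMod 3) ≠ 0 := by decide
    refine ⟨2, h2, ?_⟩
    have hodd := Nat.odd_iff.mp hq
    have hpos := (ZMod.val_ne_zero _).mpr (neg_ne_zero.mpr hc)
    have hshift : (((q / 2 : ℕ) : ZMod q)).val = q / 2 := ZMod.val_cast_of_lt (by omega)
    have hbig : ¬ (-c + rowShift q 2).val ≤ q / 2 := by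
      rw [rowShift, if_neg (by decide), ZMod.val_add_of_lt (by omega), hshift]
      omega
    simp [extremalColor, h2, hbig]
  · exact ⟨1, one_ne_zero, by simp [extremalColor, rowShift, hs]⟩

lemma extremalColor_surjective [NeZero q] : Surjective (extremalColor q)
  | .inl c => ⟨(0, c), extremalColor_zero c⟩
  | .inr i => ⟨_, extremalColor_sub_rowShift one_ne_zero i⟩

lemma exists_adj_extremalColor_inl_inl [Fact q.Prime] (hq : Odd q) {c d : ZMod q} (hcd : c ≠ d)
    (hd : d ≠ 0) : ∃ x y, (unitaryCayley (ZMod 3 × ZMod q)).Adj x y ∧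
      extremalColor q x = .inl c ∧ extremalColor q y = .inl d := by
  obtain ⟨a, ha, hpa⟩ := exists_extremalColor_eq_inl hq hd
  refine ⟨(0, c), (a, -d), unitaryCayley_prod_adj.mpr ⟨?_, ?_, ?_⟩, extremalColor_zero c, hpa⟩
  · exact fun h => ha (congrArg Prod.fst h).symm
  · simpa using ha
  · simpa [← sub_eq_add_neg, sub_ne_zero] using hcd

lemma exists_adj_extremalColor_inl_inr [Fact q.Prime] (c : ZMod q) (i : Fin (q / 2 + 1)) :
    ∃ x y, (unitaryCayley (ZMod 3 × ZMod q)).Adj x y ∧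
      extremalColor q x = .inl c ∧ extremalColor q y = .inr i := by
  have hq := (Fact.out : q.Prime).two_le
  have hshift : rowShift q 2 ≠ 0 := by
    rw [rowShift, if_neg (by decide)]
    exact ZMod.natCast_ne_zero_of_lt (by omega) (by omega)
  obtain ⟨a, ha, hsum⟩ : ∃ a : ZMod 3, a ≠ 0 ∧ c + ((i : ℕ) - rowShift q a) ≠ 0 := by
    by_cases h : c + (i : ℕ) = 0
    · exact ⟨2, by decide, by rwa [add_sub_assoc', h, zero_sub, neg_ne_zero]⟩
    · exact ⟨1, one_ne_zero, by simpa [rowShift] using h⟩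
  refine ⟨(0, c), (a, (i : ℕ) - rowShift q a), unitaryCayley_prod_adj.mpr ⟨?_, ?_, hsum⟩,
    extremalColor_zero c, extremalColor_sub_rowShift ha i⟩
  · exact fun h => ha (congrArg Prod.fst h).symm
  · simpa using ha

lemma exists_adj_extremalColor_inr_inr [Fact q.Prime] {i j : Fin (q / 2 + 1)} (hij : i ≠ j) :
    ∃ x y, (unitaryCayley (ZMod 3 × ZMod q)).Adj x y ∧
      extremalColor q x = .inr i ∧ extremalColor q y = .inr j := by
  have hi := extremalColor_sub_rowShift (q := q) one_ne_zero i
  have hj := extremalColor_sub_rowShift (q := q) one_ne_zero j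
  have h11 : (1 : ZMod 3) + 1 ≠ 0 := by decide
  refine ⟨_, _, unitaryCayley_prod_adj.mpr ⟨fun h => ?_, h11, ?_⟩, hi, hj⟩
  · exact hij (Sum.inr_injective (hi.symm.trans ((congrArg _ h).trans hj)))
  · have := Fin.val_ne_of_ne hij
    have := i.2
    have := j.2
    simpa [rowShift] using ZMod.natCast_ne_zero_of_lt (q := q) (n := i + j) (by omega) (by omega)

theorem isCompleteColoring_extremalColor [Fact q.Prime] (hq : Odd q) :
    IsCompleteColoring _ (Coloring.mk (extremalColor q) extremalColor_valid) := by
  refine ⟨extremalColor_surjective, ?_⟩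
  rintro (c | i) (d | j) hne
  · by_cases hd : d = 0
    · subst hd
      exact exists_adj_swap (exists_adj_extremalColor_inl_inl hq (Ne.symm (by simpa using hne))
        (by simpa using hne))
    · exact exists_adj_extremalColor_inl_inl hq (by simpa using hne) hd
  · exact exists_adj_extremalColor_inl_inr c j
  · exact exists_adj_swap (exists_adj_extremalColor_inl_inr d i)
  · exact exists_adj_extremalColor_inr_inr (by simpa using hne)

theorem exists_isCompleteColoring_fin [Fact q.Prime] (hq : Odd q) :
    ∃ C : (unitaryCayley (ZMod 3 × ZMod q)).Coloring (Fin ((3 * q + 1) / 2)),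
      IsCompleteColoring _ C := by
  have hcard : Fintype.card (ZMod q ⊕ Fin (q / 2 + 1)) = (3 * q + 1) / 2 := by
    rw [Fintype.card_sum, ZMod.card, Fintype.card_fin]
    have := Nat.odd_iff.mp hq
    omega
  exact ⟨_, (isCompleteColoring_extremalColor hq).recolor (Fintype.equivFinOfCardEq hcard)⟩

end LowerBound

theorem stmt_3 (q : ℕ) (hq : q.Prime) (h3 : 3 < q) :
    achromaticNumber (unitaryCayley (ZMod (3 * q))) = (3 * q + 1) / 2 := by
  have := Fact.mk hq
  have hodd : Odd q := hq.odd_of_ne_two (by omega)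
  have hcop : Nat.Coprime 3 q := (Nat.coprime_primes Nat.prime_three hq).mpr (by omega)
  rw [achromaticNumber_congr (unitaryCayleyCongr (ZMod.chineseRemainder hcop))]
  refine achromaticNumber_eq (exists_isCompleteColoring_fin hodd) fun k C hC => ?_
  have hk := hC.two_mul_card_le
  rw [Fintype.card_fin, ZMod.card] at hk
  have := Nat.odd_iff.mp hodd
  omega
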